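/- For every solution x(·) of the nonlinear multiagent system and all times s ≥ t ≥ 0, the diameter is nonincreasing: D(x(s)) ≤ D(x(t)). -/

import Mathlib

open MeasureTheory Finset

noncomputable section

/-- Diameter of a configuration of `N` agents in `ℝ^d`. -/
def mDiam {N d : ℕ} (x : Fin N → EuclideanSpace ℝ (Fin d)) : ℝ :=
  ⨆ i : Fin N, ⨆ j : Fin N, ‖x i - x j‖

/-- Variance of a configuration of `N` agents in `ℝ^d`. -/
def mVar {N d : ℕ} (x : Fin N → EuclideanSpace ℝ (Fin d)) : ℝ :=
  (N : ℝ)⁻¹ * ∑ i : Fin N, ‖x i - (N : ℝ)⁻¹ • ∑ k : Fin N, x k‖ ^ 2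

/-- Admissible interaction signals: measurable, valued in `[0,1]` on `[0,∞)`. -/
def ValidSignal (N : ℕ) (a : Fin N → Fin N → ℝ → ℝ) : Prop :=
  ∀ i j, Measurable (a i j) ∧ ∀ t : ℝ, 0 ≤ t → a i j t ∈ Set.Icc (0 : ℝ) 1

/-- Admissible kernels: locally Lipschitz and positive on `[0,∞)`. -/
def ValidKernel (φ : ℝ → ℝ) : Prop :=
  LocallyLipschitz φ ∧ ∀ r : ℝ, 0 ≤ r → 0 < φ r

/-- Solutions of the nonlinear multiagent system
`ẋ_i(t) = (1/N) ∑_j a_{ij}(t) φ(|x_i(t) − x_j(t)|)(x_j(t) − x_i(t))` for a.e. `t ≥ 0`,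
as locally Lipschitz curves on `[0,∞)`. -/
def IsMASol {N d : ℕ} (a : Fin N → Fin N → ℝ → ℝ) (φ : ℝ → ℝ)
    (x : Fin N → ℝ → EuclideanSpace ℝ (Fin d)) : Prop :=
  (∀ i, ∀ r : ℝ, 0 < r → ∃ K : NNReal, LipschitzOnWith K (x i) (Set.Icc 0 r)) ∧
  (∀ᵐ t ∂(volume : Measure ℝ), 0 ≤ t → ∀ i, HasDerivAt (x i)
    ((N : ℝ)⁻¹ • ∑ j : Fin N, (a i j t * φ ‖x i t - x j t‖) • (x j t - x i t)) t)

/-- The scrambling coefficient of an `N × N` matrix. -/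
def scrambling {N : ℕ} (A : Fin N → Fin N → ℝ) : ℝ :=
  ⨅ i : Fin N, ⨅ j : Fin N, (N : ℝ)⁻¹ * ∑ k : Fin N, min (A i k) (A j k)

/-- Scrambling-persistent signals: the scrambling coefficient of the averaged matrix
over every window `[t, t+τ]` is at least `μ`. -/
def ScramblingPersistent (N : ℕ) (τ μ : ℝ) (a : Fin N → Fin N → ℝ → ℝ) : Prop :=
  ValidSignal N a ∧
  ∀ t : ℝ, 0 ≤ t → μ ≤ scrambling (fun i j => τ⁻¹ * ∫ s in t..t + τ, a i j s)

/-- A matrix is balanced if its in- and out-degrees coincide. -/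
def IsBalanced {N : ℕ} (A : Fin N → Fin N → ℝ) : Prop :=
  ∀ i, ∑ j : Fin N, A i j = ∑ j : Fin N, A j i

/-- The algebraic connectivity of a (balanced) matrix: the largest `λ` such that
`(1/(2N²)) ∑_{ij} a_{ij} |x_i − x_j|² ≥ λ V(x)` for all configurations `x`. -/
def lambda2 (d : ℕ) {N : ℕ} (A : Fin N → Fin N → ℝ) : ℝ :=
  sSup {lam : ℝ | ∀ x : Fin N → EuclideanSpace ℝ (Fin d),
    lam * mVar x ≤ (2 * (N : ℝ) ^ 2)⁻¹ * ∑ i : Fin N, ∑ j : Fin N, A i j * ‖x i - x j‖ ^ 2}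

/-- Connectivity-persistent balanced signals. -/
def ConnectivityPersistent (N d : ℕ) (τ μ : ℝ) (a : Fin N → Fin N → ℝ → ℝ) : Prop :=
  ValidSignal N a ∧
  (∀ᵐ t ∂(volume : Measure ℝ), 0 ≤ t → IsBalanced (fun i j => a i j t)) ∧
  ∀ t : ℝ, 0 ≤ t → μ ≤ lambda2 d (fun i j => τ⁻¹ * ∫ s in t..t + τ, a i j s)

/-- Solutions of the linear multiagent system
`ẋ_i(t) = (1/N) ∑_j a_{ij}(t) (x_j(t) − x_i(t))` for a.e. `t ≥ 0`. -/
def IsLinSol {N d : ℕ} (a : Fin N → Fin N → ℝ → ℝ)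
    (x : Fin N → ℝ → EuclideanSpace ℝ (Fin d)) : Prop :=
  (∀ i, ∀ r : ℝ, 0 < r → ∃ K : NNReal, LipschitzOnWith K (x i) (Set.Icc 0 r)) ∧
  (∀ᵐ t ∂(volume : Measure ℝ), 0 ≤ t → ∀ i, HasDerivAt (x i)
    ((N : ℝ)⁻¹ • ∑ j : Fin N, a i j t • (x j t - x i t)) t)

/-! For every direction `v`, the support function `u ↦ maxₖ ⟪v, x k u⟫` of the configuration is
nonincreasing: at almost every time, an agent that is extremal in direction `v` is pulled only
towards agents lying behind it, so the derivative of an active branch of the maximum is `≤ 0`,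
and a Lipschitz function whose derivative is a.e. nonpositive decreases. Hence every half-space
containing the configuration at time `t` still contains it at time `s ≥ t`, and testing with
`v = x i s - x j s` bounds `‖x i s - x j s‖` by the diameter at time `t`. -/

open RealInnerProductSpace

theorem LipschitzOnWith.max {α : Type*} [PseudoEMetricSpace α] {f g : α → ℝ} {Kf Kg : NNReal}
    {S : Set α} (hf : LipschitzOnWith Kf f S) (hg : LipschitzOnWith Kg g S) :
    LipschitzOnWith (max Kf Kg) (fun u => max (f u) (g u)) S := by
  rw [lipschitzOnWith_iff_restrict] at hf hg ⊢
  exact hf.max hg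

theorem Finset.exists_lipschitzOnWith_sup' {ι α : Type*} [PseudoEMetricSpace α] {s : Finset ι}
    (hs : s.Nonempty) {f : ι → α → ℝ} {S : Set α}
    (hf : ∀ i ∈ s, ∃ K, LipschitzOnWith K (f i) S) :
    ∃ K, LipschitzOnWith K (fun u => s.sup' hs (f · u)) S := by
  simp_rw [← Finset.sup'_apply]
  exact Finset.sup'_induction (p := fun g => ∃ K, LipschitzOnWith K g S) hs f
    (fun _ ⟨_, hg⟩ _ ⟨_, hh⟩ => ⟨_, hg.max hh⟩) hf

theorem AbsolutelyContinuousOnInterval.le_of_ae_deriv_nonpos {f : ℝ → ℝ} {a b : ℝ}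
    (hab : a ≤ b) (hf : AbsolutelyContinuousOnInterval f a b)
    (hf' : ∀ᵐ u, u ∈ Set.Ioo a b → deriv f u ≤ 0) :
    f b ≤ f a := by
  have hneg : 0 ≤ᵐ[volume.restrict (Set.Icc a b)] fun u => -deriv f u := by
    rw [Filter.EventuallyLE, ← ae_restrict_congr_set Ioo_ae_eq_Icc,
      ae_restrict_iff' measurableSet_Ioo]
    filter_upwards [hf'] with u hu hmem using neg_nonneg.2 (hu hmem)
  have := intervalIntegral.integral_nonneg_of_ae_restrict hab hneg
  rw [intervalIntegral.integral_neg, hf.integral_deriv_eq_sub] at this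
  linarith

theorem DifferentiableAt.deriv_eq_of_hasDerivAt_of_le {f g : ℝ → ℝ} {c u : ℝ}
    (hg : DifferentiableAt ℝ g u) (hf : HasDerivAt f c u) (hle : ∀ w, f w ≤ g w)
    (heq : f u = g u) :
    deriv g u = c := by
  have hmin : IsLocalMin (fun w => g w - f w) u :=
    Filter.Eventually.of_forall fun w => by simp only [heq, sub_self]; linarith [hle w]
  linarith [hmin.hasDerivAt_eq_zero (hg.hasDerivAt.sub hf)]

theorem Finset.sup'_le_sup'_of_ae_active_deriv_nonpos {ι : Type*} {s : Finset ι}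
    (hs : s.Nonempty) {f : ι → ℝ → ℝ} {a b : ℝ} (hab : a ≤ b)
    (hf : ∀ i ∈ s, ∃ K, LipschitzOnWith K (f i) (Set.Icc a b))
    (hf' : ∀ᵐ u, u ∈ Set.Ioo a b → ∀ i ∈ s, f i u = s.sup' hs (f · u) →
      ∃ c ≤ 0, HasDerivAt (f i) c u) :
    s.sup' hs (f · b) ≤ s.sup' hs (f · a) := by
  obtain ⟨K, hK⟩ := Finset.exists_lipschitzOnWith_sup' hs hf
  have hac := (Set.uIcc_of_le hab ▸ hK).absolutelyContinuousOnInterval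
  refine hac.le_of_ae_deriv_nonpos hab ?_
  filter_upwards [hac.ae_differentiableAt, hf'] with u hdiff hactive hu
  obtain ⟨i, hi, hmax⟩ := Finset.exists_mem_eq_sup' hs (f · u)
  obtain ⟨c, hc, hfi⟩ := hactive hu i hi hmax.symm
  have hu' : u ∈ Set.uIcc a b := Set.Ioo_subset_Icc_self.trans Set.Icc_subset_uIcc hu
  rw [(hdiff hu').deriv_eq_of_hasDerivAt_of_le hfi (fun w => Finset.le_sup' (f · w) hi) hmax.symm]
  exact hc

theorem inner_sum_smul_sub_nonpos {ι E : Type*} [Fintype ι] [NormedAddCommGroup E]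
    [InnerProductSpace ℝ E] {v : E} {y : ι → E} {w : ι → ℝ} {k : ι} (hw : ∀ j, 0 ≤ w j)
    (hk : ∀ j, ⟪v, y j⟫ ≤ ⟪v, y k⟫) :
    ⟪v, ∑ j, w j • (y j - y k)⟫ ≤ 0 := by
  rw [inner_sum]
  refine Finset.sum_nonpos fun j _ => ?_
  rw [real_inner_smul_right, inner_sub_right]
  exact mul_nonpos_of_nonneg_of_nonpos (hw j) (sub_nonpos.2 (hk j))

theorem norm_sub_le_mDiam {N d : ℕ} (y : Fin N → EuclideanSpace ℝ (Fin d)) (i j : Fin N) :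
    ‖y i - y j‖ ≤ mDiam y :=
  (le_ciSup (f := fun j => ‖y i - y j‖) (Set.finite_range _).bddAbove j).trans
    (le_ciSup (f := fun i => ⨆ j, ‖y i - y j‖) (Set.finite_range _).bddAbove i)

theorem mDiam_nonneg {N d : ℕ} (y : Fin N → EuclideanSpace ℝ (Fin d)) : 0 ≤ mDiam y :=
  Real.iSup_nonneg fun _ => Real.iSup_nonneg fun _ => norm_nonneg _

theorem mDiam_le_of_forall_exists_inner_le {N d : ℕ} {y z : Fin N → EuclideanSpace ℝ (Fin d)}
    (h : ∀ v i, ∃ k, ⟪v, y i⟫ ≤ ⟪v, z k⟫) :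
    mDiam y ≤ mDiam z := by
  refine Real.iSup_le (fun i => Real.iSup_le (fun j => ?_) (mDiam_nonneg z)) (mDiam_nonneg z)
  set v := y i - y j
  obtain ⟨k, hk⟩ := h v i
  obtain ⟨l, hl⟩ := h (-v) j
  have : ‖v‖ ^ 2 ≤ ‖v‖ * mDiam z :=
    calc ‖v‖ ^ 2 = ⟪v, y i⟫ - ⟪v, y j⟫ := by rw [← inner_sub_right, real_inner_self_eq_norm_sq]
      _ ≤ ⟪v, z k - z l⟫ := by
        rw [inner_sub_right]; simp only [inner_neg_left] at hl; linarith
      _ ≤ ‖v‖ * ‖z k - z l‖ := real_inner_le_norm _ _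
      _ ≤ ‖v‖ * mDiam z := mul_le_mul_of_nonneg_left (norm_sub_le_mDiam z k l) (norm_nonneg v)
  nlinarith [norm_nonneg v, mDiam_nonneg z]

namespace IsMASol

variable {N d : ℕ} {a : Fin N → Fin N → ℝ → ℝ} {φ : ℝ → ℝ}
  {x : Fin N → ℝ → EuclideanSpace ℝ (Fin d)}

theorem ae_hasDerivAt_inner_nonpos_of_extremal (ha : ∀ i j u, 0 ≤ u → 0 ≤ a i j u)
    (hφ : ∀ r, 0 ≤ r → 0 ≤ φ r) (hx : IsMASol a φ x) (v : EuclideanSpace ℝ (Fin d)) :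
    ∀ᵐ u, 0 ≤ u → ∀ k, (∀ j, ⟪v, x j u⟫ ≤ ⟪v, x k u⟫) →
      ∃ c ≤ 0, HasDerivAt (fun w => ⟪v, x k w⟫) c u := by
  filter_upwards [hx.2] with u hderiv hu k hk
  refine ⟨_, ?_, (hasDerivAt_const u v).inner ℝ (hderiv hu k)⟩
  rw [inner_zero_left, add_zero, real_inner_smul_right]
  exact mul_nonpos_of_nonneg_of_nonpos (by positivity) (inner_sum_smul_sub_nonpos
    (fun j => mul_nonneg (ha k j u hu) (hφ ‖x k u - x j u‖ (norm_nonneg _))) hk)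

theorem exists_inner_le (ha : ∀ i j u, 0 ≤ u → 0 ≤ a i j u) (hφ : ∀ r, 0 ≤ r → 0 ≤ φ r)
    (hx : IsMASol a φ x) {t s : ℝ} (ht : 0 ≤ t) (hts : t ≤ s) (v : EuclideanSpace ℝ (Fin d))
    (i : Fin N) :
    ∃ k, ⟪v, x i s⟫ ≤ ⟪v, x k t⟫ := by
  have hne : (Finset.univ : Finset (Fin N)).Nonempty := ⟨i, Finset.mem_univ i⟩
  obtain ⟨k, -, hk⟩ := Finset.exists_mem_eq_sup' hne (fun k => ⟪v, x k t⟫)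
  refine ⟨k, (Finset.le_sup' (fun k => ⟪v, x k s⟫) (Finset.mem_univ i)).trans (hk ▸ ?_)⟩
  refine Finset.sup'_le_sup'_of_ae_active_deriv_nonpos (f := fun k u => ⟪v, x k u⟫) hne hts
    (fun k _ => ?_) ?_
  · obtain ⟨K, hK⟩ := hx.1 k (s + 1) (by linarith)
    exact ⟨_, (innerSL ℝ v).lipschitz.comp_lipschitzOnWith
      (hK.mono (Set.Icc_subset_Icc ht (by linarith)))⟩
  · filter_upwards [hx.ae_hasDerivAt_inner_nonpos_of_extremal ha hφ v] with u hu hmem k _ hmax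
    exact hu (ht.trans hmem.1.le) k fun j => hmax ▸ Finset.le_sup' (fun k => ⟪v, x k u⟫)
      (Finset.mem_univ j)

end IsMASol

theorem diam_nonincreasing_general {N d : ℕ}
    (a : Fin N → Fin N → ℝ → ℝ) (φ : ℝ → ℝ)
    (ha : ValidSignal N a) (hφ : ValidKernel φ)
    (x : Fin N → ℝ → EuclideanSpace ℝ (Fin d)) (hx : IsMASol a φ x)
    (t s : ℝ) (ht : 0 ≤ t) (hts : t ≤ s) :
    mDiam (fun i => x i s) ≤ mDiam (fun i => x i t) :=
  mDiam_le_of_forall_exists_inner_le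
    (hx.exists_inner_le (fun i j u hu => ((ha i j).2 u hu).1) (fun r hr => (hφ.2 r hr).le) ht hts)

/-- Along any solution of the nonlinear multiagent system, the diameter
is nonincreasing on `[0,∞)`. -/
theorem diam_nonincreasing {N d : ℕ} (hN : 1 ≤ N)
    (a : Fin N → Fin N → ℝ → ℝ) (φ : ℝ → ℝ)
    (ha : ValidSignal N a) (hφ : ValidKernel φ)
    (x : Fin N → ℝ → EuclideanSpace ℝ (Fin d)) (hx : IsMASol a φ x)
    (t s : ℝ) (ht : 0 ≤ t) (hts : t ≤ s) :
    mDiam (fun i => x i s) ≤ mDiam (fun i => x i t) :=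
  diam_nonincreasing_general a φ ha hφ x hx t s ht hts
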